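/- Let G be a properly edge-coloured μ-balanced graph with n vertices, average degree d ≥ 2 and s colours. Let 2 ≤ k < d/32 be an integer such that s ≤ (1/4)·n·d^{−k+1}·μ^{−k+1}. Let α > 1 and assume hom(C_{2k}, G) ≤ α·n·d^k. Then, for t = ⌈s/(8kμ)⌉, there are at least (n·(d/32)^k)^t sequences of labelled paths P_1, ..., P_t which are (k, 2α·16^k)-nice. -/

import Mathlib

/-- A sequence of labelled paths `P 0, …, P (t-1)` (each a function `Fin (k+1) → V`) is
`(k,q)`-nice if: each path has `k` edges; each colour appears at most once on the union of the
paths; for `i ≠ j` every walk in `G` between a vertex of `P i` and a vertex of `P j` has length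
greater than `k - 1`; and the number of homomorphic copies of `C_{2k}` extending each `P i` is
at most `q`. -/
def KQNicePaths {V K : Type*} (G : SimpleGraph V) (c : Sym2 V → K)
    (k : ℕ) (q : ℝ) {t : ℕ} (P : Fin t → Fin (k + 1) → V) : Prop :=
  (∀ i, Function.Injective (P i) ∧ ∀ ℓ : Fin k, G.Adj (P i ℓ.castSucc) (P i ℓ.succ)) ∧
  (∀ i j (ℓ m : Fin k),
      c s(P i ℓ.castSucc, P i ℓ.succ) = c s(P j m.castSucc, P j m.succ) →
      s(P i ℓ.castSucc, P i ℓ.succ) = s(P j m.castSucc, P j m.succ)) ∧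
  (∀ i j, i ≠ j → ∀ (ℓ m : Fin (k + 1)) (w : G.Walk (P i ℓ) (P j m)), k - 1 < w.length) ∧
  (∀ i, (Nat.card {f : ZMod (2 * k) → V //
      (∀ x, G.Adj (f x) (f (x + 1))) ∧
      ∀ ℓ : Fin (k + 1), f ((ℓ : ℕ) : ZMod (2 * k)) = P i ℓ} : ℝ) ≤ q)

/-!
The sequences are built one path at a time. Let `P` be a nice sequence of `m < s/(8kμ)` paths.
Since `(1 + μd)^(k-1) ≤ 2(μd)^(k-1)`, the `(k-1)`-neighbourhood `B` of its vertices satisfies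
`|B| μd ≤ 3nd/32`, and its colours cover at most `nd/8` edges. Deleting these edges and then
repeatedly the edges at vertices of degree below `d/8` leaves a subgraph `H` with at least `5nd/32`
edges whose non-isolated vertices have degree at least `d/8`. As the colouring is proper, a rainbow
path in `H` with fewer than `k` edges has at least `d/16` rainbow extensions, so `H` contains at
least `5n(d/16)^k` rainbow paths with `k` edges. By Markov's inequality at most `n(d/16)^k/2` of
them extend to more than `2α16^k` homomorphic copies of `C_{2k}`, so `P` can be extended in at
least `n(d/32)^k` ways.
-/

open Finset
open scoped Classical

theorem card_mul_le_card_of_forall_exists_snoc {α : Type*} {m : ℕ} {S : Finset (Fin m → α)}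
    {T : Finset (Fin (m + 1) → α)} {N : ℝ}
    (h : ∀ P ∈ S, ∃ A : Finset α, N ≤ #A ∧ ∀ a ∈ A, Fin.snoc P a ∈ T) :
    #S * N ≤ #T := by
  choose! A hA hAT using h
  have hinj : Set.InjOn (fun x : (_ : Fin m → α) × α => (Fin.snoc x.1 x.2 : Fin (m + 1) → α))
      (S.sigma A) := by
    rintro ⟨P, a⟩ - ⟨P', a'⟩ - h
    obtain ⟨rfl, rfl⟩ := Fin.snoc_injective2 h
    rfl
  have hsub : (S.sigma A).image (fun x => (Fin.snoc x.1 x.2 : Fin (m + 1) → α)) ⊆ T := by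
    simp only [image_subset_iff, mem_sigma]
    exact fun x hx => hAT x.1 hx.1 x.2 hx.2
  calc (#S : ℝ) * N = ∑ _P ∈ S, N := by rw [sum_const, nsmul_eq_mul]
    _ ≤ ∑ P ∈ S, (#(A P) : ℝ) := sum_le_sum hA
    _ = #((S.sigma A).image fun x => (Fin.snoc x.1 x.2 : Fin (m + 1) → α)) := by
      rw [card_image_of_injOn hinj, card_sigma, Nat.cast_sum]
    _ ≤ #T := by exact_mod_cast card_le_card hsub

theorem pow_le_card_of_forall_exists_snoc {α : Type*} [Fintype α]
    (p : ∀ {m : ℕ}, (Fin m → α) → Prop) {N : ℝ} (hN : 0 ≤ N) {t : ℕ} (h₀ : p Fin.elim0)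
    (h : ∀ m < t, ∀ P : Fin m → α, p P → ∃ A : Finset α, N ≤ #A ∧ ∀ a ∈ A, p (Fin.snoc P a)) :
    N ^ t ≤ #{P : Fin t → α | p P} := by
  induction t with
  | zero =>
    have : Fin.elim0 ∈ ({P : Fin 0 → α | p P} : Finset _) := mem_filter.2 ⟨mem_univ _, h₀⟩
    simpa using card_pos.2 ⟨_, this⟩
  | succ m ih =>
    calc N ^ (m + 1) = N ^ m * N := pow_succ N m
      _ ≤ #{P : Fin m → α | p P} * N :=
        mul_le_mul_of_nonneg_right (ih fun j hj => h j (by omega)) hN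
      _ ≤ #{P : Fin (m + 1) → α | p P} := by
        refine card_mul_le_card_of_forall_exists_snoc fun P hP => ?_
        obtain ⟨A, hA, hAp⟩ := h m (by omega) P (mem_filter.1 hP).2
        exact ⟨A, hA, fun a ha => mem_filter.2 ⟨mem_univ _, hAp a ha⟩⟩

theorem one_add_pow_le_two_mul_pow {x : ℝ} {r : ℕ} (hx : 0 < x) (hr : 2 * r ≤ x) :
    (1 + x) ^ r ≤ 2 * x ^ r := by
  have hstep : 1 + x ≤ x * Real.exp x⁻¹ := by
    have := Real.add_one_le_exp x⁻¹
    calc 1 + x = x * (x⁻¹ + 1) := by field_simp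
      _ ≤ x * Real.exp x⁻¹ := by gcongr
  have hexp : Real.exp (r * x⁻¹) ≤ 2 := by
    calc Real.exp (r * x⁻¹) ≤ Real.exp (1 / 2) := by
          gcongr
          rw [← div_eq_mul_inv, div_le_iff₀ hx]
          linarith
      _ ≤ 1 / (1 - 1 / 2) := Real.exp_bound_div_one_sub_of_interval (by norm_num) (by norm_num)
      _ = 2 := by norm_num
  calc (1 + x) ^ r ≤ (x * Real.exp x⁻¹) ^ r := by gcongr
    _ = x ^ r * Real.exp (r * x⁻¹) := by rw [mul_pow, ← Real.exp_nat_mul]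
    _ ≤ x ^ r * 2 := by gcongr
    _ = 2 * x ^ r := mul_comm _ _

theorem mul_pow_le_of_le_rpow {n s d μ : ℝ} {k : ℕ} (hk : 1 ≤ k) (hd : 0 < d) (hμ : 0 < μ)
    (h : s ≤ 1 / 4 * n * d ^ (-(k : ℝ) + 1) * μ ^ (-(k : ℝ) + 1)) :
    s * d ^ (k - 1) * μ ^ (k - 1) ≤ n / 4 := by
  have hexp : -(k : ℝ) + 1 = -((k - 1 : ℕ) : ℝ) := by push_cast [Nat.cast_sub hk]; ring
  rw [hexp, Real.rpow_neg hd.le, Real.rpow_neg hμ.le, Real.rpow_natCast, Real.rpow_natCast] at h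
  calc s * d ^ (k - 1) * μ ^ (k - 1)
      ≤ 1 / 4 * n * (d ^ (k - 1))⁻¹ * (μ ^ (k - 1))⁻¹ * d ^ (k - 1) * μ ^ (k - 1) := by gcongr
    _ = n / 4 := by field_simp

namespace SimpleGraph

variable {V K : Type*}

structure IsRainbowPath (H : SimpleGraph V) (c : Sym2 V → K) {ℓ : ℕ} (w : Fin (ℓ + 1) → V) :
    Prop where
  injective : Function.Injective w
  adj : ∀ i : Fin ℓ, H.Adj (w i.castSucc) (w i.succ)
  injective_colour : Function.Injective fun i : Fin ℓ => c s(w i.castSucc, w i.succ)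

namespace IsRainbowPath

variable {H H' : SimpleGraph V} {c : Sym2 V → K} {ℓ : ℕ} {w : Fin (ℓ + 1) → V}

theorem mono (hw : H.IsRainbowPath c w) (hle : H ≤ H') : H'.IsRainbowPath c w :=
  ⟨hw.injective, fun i => hle (hw.adj i), hw.injective_colour⟩

theorem snoc (hw : H.IsRainbowPath c w) {u : V} (hadj : H.Adj (w (Fin.last ℓ)) u)
    (hu : u ∉ Set.range w)
    (hcol : c s(w (Fin.last ℓ), u) ∉ Set.range fun i : Fin ℓ => c s(w i.castSucc, w i.succ)) :
    H.IsRainbowPath c (Fin.snoc w u : Fin (ℓ + 2) → V) := by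
  have hcolours : (fun i : Fin (ℓ + 1) =>
      c s((Fin.snoc w u : Fin (ℓ + 2) → V) i.castSucc, (Fin.snoc w u : Fin (ℓ + 2) → V) i.succ)) =
      Fin.snoc (fun i : Fin ℓ => c s(w i.castSucc, w i.succ)) (c s(w (Fin.last ℓ), u)) := by
    funext i
    induction i using Fin.lastCases with
    | last => simp only [Fin.succ_last, Fin.snoc_last, Fin.snoc_castSucc]
    | cast i => simp only [Fin.succ_castSucc, Fin.snoc_castSucc]
  refine ⟨Fin.snoc_injective_of_injective hw.injective hu, fun i => ?_, ?_⟩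
  · induction i using Fin.lastCases with
    | last => simpa only [Fin.succ_last, Fin.snoc_last, Fin.snoc_castSucc] using hadj
    | cast i => simpa only [Fin.succ_castSucc, Fin.snoc_castSucc] using hw.adj i
  · rw [hcolours]
    exact Fin.snoc_injective_of_injective hw.injective_colour hcol

theorem degree_last_pos [Fintype V] {w : Fin (ℓ + 2) → V} (hw : H.IsRainbowPath c w) :
    0 < H.degree (w (Fin.last (ℓ + 1))) :=
  (H.degree_pos_iff_exists_adj _).2 ⟨_, (hw.adj (Fin.last ℓ)).symm⟩

end IsRainbowPath

variable [Fintype V]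

section RainbowPaths

variable {H : SimpleGraph V} {c : Sym2 V → K}

theorem degree_le_card_filter_add
    (hproper : ∀ u v w : V, H.Adj u v → H.Adj u w → v ≠ w → c s(u, v) ≠ c s(u, w))
    (v : V) (X : Finset V) (C : Finset K) :
    H.degree v ≤ #{u ∈ H.neighborFinset v | u ∉ X ∧ c s(v, u) ∉ C} + #X + #C := by
  have hcover : H.neighborFinset v ⊆
      {u ∈ H.neighborFinset v | u ∉ X ∧ c s(v, u) ∉ C} ∪ X ∪
        {u ∈ H.neighborFinset v | c s(v, u) ∈ C} := by
    intro u hu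
    by_cases huX : u ∈ X <;> by_cases huC : c s(v, u) ∈ C <;> simp_all
  have hC : #{u ∈ H.neighborFinset v | c s(v, u) ∈ C} ≤ #C := by
    refine card_le_card_of_injOn (fun u => c s(v, u)) (fun u hu => (mem_filter.1 hu).2) ?_
    intro u hu u' hu' h
    by_contra hne
    simp only [coe_filter, mem_neighborFinset, Set.mem_ofPred_eq] at hu hu'
    exact hproper v u u' hu.1 hu'.1 hne h
  rw [← card_neighborFinset_eq_degree]
  calc _ ≤ _ := card_le_card hcover
    _ ≤ _ := card_union_le _ _
    _ ≤ _ := add_le_add (card_union_le _ _) hC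

theorem two_mul_card_edgeFinset_le_card_isRainbowPath :
    2 * #H.edgeFinset ≤ #{w : Fin 2 → V | H.IsRainbowPath c w} := by
  rw [← dart_card_eq_twice_card_edges, ← card_univ]
  refine card_le_card_of_injOn (fun d => ![d.fst, d.snd]) (fun d _ => ?_) ?_
  · refine mem_filter.2 ⟨mem_univ _, ⟨?_, fun i => ?_, fun i j _ => Subsingleton.elim i j⟩⟩
    · intro i j hij
      fin_cases i <;> fin_cases j <;> simp_all [d.adj.ne, d.adj.ne.symm]
    · fin_cases i; simp [d.adj]
  · intro d _ d' _ h
    exact Dart.ext _ _ (Prod.ext (congrFun h 0) (congrFun h 1))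

theorem le_card_isRainbowPath
    (hproper : ∀ u v w : V, H.Adj u v → H.Adj u w → v ≠ w → c s(u, v) ≠ c s(u, w))
    {θ : ℝ} (hdeg : ∀ v, H.degree v = 0 ∨ θ ≤ H.degree v) {ℓ : ℕ} (hθ : 2 * (2 * ℓ + 1) ≤ θ) :
    2 * #H.edgeFinset * (θ / 2) ^ ℓ ≤ #{w : Fin (ℓ + 2) → V | H.IsRainbowPath c w} := by
  induction ℓ with
  | zero => simpa using (Nat.cast_le (α := ℝ)).2 two_mul_card_edgeFinset_le_card_isRainbowPath
  | succ ℓ ih =>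
    have hθ' : 2 * (2 * (ℓ : ℝ) + 1) ≤ θ := by push_cast at hθ; linarith
    rw [pow_succ, ← mul_assoc]
    refine (mul_le_mul_of_nonneg_right (ih hθ') (by linarith)).trans
      (card_mul_le_card_of_forall_exists_snoc fun w hw => ?_)
    have hw : H.IsRainbowPath c w := (mem_filter.1 hw).2
    set v := w (Fin.last (ℓ + 1))
    set C := univ.image fun i : Fin (ℓ + 1) => c s(w i.castSucc, w i.succ)
    refine ⟨{u ∈ H.neighborFinset v | u ∉ univ.image w ∧ c s(v, u) ∉ C}, ?_, fun u hu => ?_⟩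
    · have hcount := degree_le_card_filter_add hproper v (univ.image w) C
      have hX : #(univ.image w) ≤ ℓ + 2 := card_image_le.trans (by simp)
      have hC : #C ≤ ℓ + 1 := card_image_le.trans (by simp)
      have hv : θ ≤ H.degree v := (hdeg v).resolve_left hw.degree_last_pos.ne'
      have : (H.degree v : ℝ) ≤
          #{u ∈ H.neighborFinset v | u ∉ univ.image w ∧ c s(v, u) ∉ C} + (ℓ + 2) + (ℓ + 1) := by
        exact_mod_cast hcount.trans (by omega)
      push_cast at hθ
      linarith
    · simp only [mem_filter, mem_neighborFinset, mem_image, mem_univ, true_and, not_exists,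
        C] at hu
      exact mem_filter.2 ⟨mem_univ _, hw.snoc hu.1 (by simpa using hu.2.1)
        (by simpa using hu.2.2)⟩

end RainbowPaths

theorem exists_le_forall_degree_eq_zero_or_le (H : SimpleGraph V) {θ : ℝ} (hθ : 0 ≤ θ) :
    ∃ H' ≤ H, (∀ v, H'.degree v = 0 ∨ θ ≤ H'.degree v) ∧
      (#H.edgeFinset : ℝ) ≤ #H'.edgeFinset + θ * Fintype.card V := by
  -- Stripping the edges at a vertex of degree in `(0, θ)` would increase `f` at a maximiser.
  let f : SimpleGraph V → ℝ := fun H' => #H'.edgeFinset - θ * #{v | v ∈ H'.support}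
  obtain ⟨H', hH', hmax⟩ := exists_max_image {H' | H' ≤ H} f ⟨H, by simp⟩
  have hH' : H' ≤ H := (mem_filter.1 hH').2
  refine ⟨H', hH', fun v => ?_, ?_⟩
  · by_contra! hv
    set H'' := H'.deleteIncidenceSet v
    have hE : #H''.edgeFinset + H'.degree v = #H'.edgeFinset := by
      rw [edgeFinset_deleteIncidenceSet_eq_sdiff, ← card_incidenceFinset_eq_degree]
      exact card_sdiff_add_card_eq_card (H'.incidenceFinset_subset v)
    have hS : #{x | x ∈ H''.support} + 1 ≤ #{x | x ∈ H'.support} := by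
      have hv' : v ∈ H'.support := (H'.degree_pos_iff_mem_support v).1 (Nat.pos_of_ne_zero hv.1)
      rw [← card_erase_add_one (mem_filter.2 ⟨mem_univ v, hv'⟩)]
      gcongr
      intro x hx
      have := support_deleteIncidenceSet_subset H' v (mem_filter.1 hx).2
      simp_all
    have hle : (#H''.edgeFinset : ℝ) - θ * #{x | x ∈ H''.support} ≤
        #H'.edgeFinset - θ * #{x | x ∈ H'.support} := by
      have : f H'' ≤ f H' :=
        hmax H'' (mem_filter.2 ⟨mem_univ _, (deleteIncidenceSet_le H' v).trans hH'⟩)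
      -- the two sides carry different `Fintype` instances on `H''.edgeSet`
      convert this
    have hE' : (#H''.edgeFinset : ℝ) + H'.degree v = #H'.edgeFinset := by exact_mod_cast hE
    have hS' : (#{x | x ∈ H''.support} : ℝ) + 1 ≤ #{x | x ∈ H'.support} := by exact_mod_cast hS
    nlinarith [mul_le_mul_of_nonneg_left hS' hθ]
  · have hle : f H ≤ f H' := hmax H (mem_filter.2 ⟨mem_univ _, le_rfl⟩)
    have hcard : (#{x | x ∈ H.support} : ℝ) ≤ Fintype.card V := by
      exact_mod_cast card_filter_le _ _
    simp only [f] at hle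
    nlinarith [mul_le_mul_of_nonneg_left hcard hθ,
      mul_nonneg hθ (Nat.cast_nonneg (α := ℝ) #{x | x ∈ H'.support})]

noncomputable def ballFinset (G : SimpleGraph V) (S : Finset V) : ℕ → Finset V
  | 0 => S
  | r + 1 => ballFinset G S r ∪ (ballFinset G S r).biUnion fun v => G.neighborFinset v

theorem card_ballFinset_le (G : SimpleGraph V) (S : Finset V) {Δ : ℝ} (hΔ : 0 ≤ Δ)
    (hdeg : ∀ v, G.degree v ≤ Δ) (r : ℕ) :
    #(G.ballFinset S r) ≤ #S * (1 + Δ) ^ r := by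
  induction r with
  | zero => simp [ballFinset]
  | succ r ih =>
    have hnbrs : (#((G.ballFinset S r).biUnion fun v => G.neighborFinset v) : ℝ) ≤
        #(G.ballFinset S r) * Δ :=
      calc _ ≤ ((∑ v ∈ G.ballFinset S r, #(G.neighborFinset v) : ℕ) : ℝ) := by
            exact_mod_cast card_biUnion_le
        _ ≤ ∑ _v ∈ G.ballFinset S r, Δ := by
            push_cast
            exact sum_le_sum fun v _ => by simpa using hdeg v
        _ = _ := by rw [sum_const, nsmul_eq_mul]
    calc (#(G.ballFinset S (r + 1)) : ℝ)
        ≤ #(G.ballFinset S r) + #((G.ballFinset S r).biUnion fun v => G.neighborFinset v) := by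
          exact_mod_cast card_union_le _ _
      _ ≤ #(G.ballFinset S r) * (1 + Δ) := by linarith
      _ ≤ #S * (1 + Δ) ^ r * (1 + Δ) := by gcongr
      _ = #S * (1 + Δ) ^ (r + 1) := by ring

theorem ballFinset_mono (G : SimpleGraph V) (S : Finset V) : Monotone (G.ballFinset S) :=
  monotone_nat_of_le_succ fun _ => subset_union_left

theorem mem_ballFinset_add_length (G : SimpleGraph V) (S : Finset V) {u v : V} {r : ℕ}
    (hu : u ∈ G.ballFinset S r) (p : G.Walk u v) : v ∈ G.ballFinset S (r + p.length) := by
  induction p generalizing r with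
  | nil => simpa using hu
  | cons h p ih =>
    rw [Walk.length_cons, add_comm p.length, ← add_assoc]
    refine ih ?_
    rw [ballFinset]
    exact mem_union_right _ (mem_biUnion.2 ⟨_, hu, (G.mem_neighborFinset _ _).2 h⟩)

theorem mem_ballFinset_of_walk (G : SimpleGraph V) {S : Finset V} {u v : V} {r : ℕ}
    (hu : u ∈ S) (p : G.Walk u v) (hp : p.length ≤ r) : v ∈ G.ballFinset S r :=
  G.ballFinset_mono S (by omega) (G.mem_ballFinset_add_length S (r := 0) hu p)

theorem card_ballFinset_mul_le (G : SimpleGraph V) (S : Finset V) {Δ : ℝ} {r : ℕ}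
    (hdeg : ∀ v, G.degree v ≤ Δ) (hr : 2 * r ≤ Δ) (hΔ : 0 < Δ) :
    #(G.ballFinset S r) * Δ ≤ 2 * #S * Δ ^ (r + 1) := by
  calc #(G.ballFinset S r) * Δ ≤ #S * (1 + Δ) ^ r * Δ := by
        gcongr; exact G.card_ballFinset_le S hΔ.le hdeg r
    _ ≤ #S * (2 * Δ ^ r) * Δ := by gcongr; exact one_add_pow_le_two_mul_pow hΔ hr
    _ = 2 * #S * Δ ^ (r + 1) := by ring

theorem card_filter_colour_mem_le (G : SimpleGraph V) (c : Sym2 V → K) (C : Finset K) {M : ℝ}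
    (hM : ∀ x, #{e ∈ G.edgeFinset | c e = x} ≤ M) :
    #{e ∈ G.edgeFinset | c e ∈ C} ≤ #C * M := by
  have hsub :
      {e ∈ G.edgeFinset | c e ∈ C} ⊆ C.biUnion fun x => {e ∈ G.edgeFinset | c e = x} := by
    intro e he
    simp only [mem_filter] at he
    exact mem_biUnion.2 ⟨c e, he.2, mem_filter.2 ⟨he.1, rfl⟩⟩
  calc (#{e ∈ G.edgeFinset | c e ∈ C} : ℝ)
      ≤ ((∑ x ∈ C, #{e ∈ G.edgeFinset | c e = x} : ℕ) : ℝ) := by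
        exact_mod_cast (card_le_card hsub).trans card_biUnion_le
    _ ≤ ∑ _x ∈ C, M := by push_cast; exact sum_le_sum fun x _ => hM x
    _ = #C * M := by rw [sum_const, nsmul_eq_mul]

theorem card_filter_exists_mem_le (G : SimpleGraph V) (B : Finset V) {Δ : ℝ}
    (hdeg : ∀ v, G.degree v ≤ Δ) :
    #{e ∈ G.edgeFinset | ∃ v ∈ B, v ∈ e} ≤ #B * Δ := by
  have hsub :
      {e ∈ G.edgeFinset | ∃ v ∈ B, v ∈ e} ⊆ B.biUnion fun v => G.incidenceFinset v := by
    intro e he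
    simp only [mem_filter] at he
    obtain ⟨v, hv, hve⟩ := he.2
    exact mem_biUnion.2 ⟨v, hv, (G.mem_incidenceFinset v e).2 ⟨mem_edgeFinset.1 he.1, hve⟩⟩
  calc (#{e ∈ G.edgeFinset | ∃ v ∈ B, v ∈ e} : ℝ)
      ≤ ((∑ v ∈ B, #(G.incidenceFinset v) : ℕ) : ℝ) := by
        exact_mod_cast (card_le_card hsub).trans card_biUnion_le
    _ ≤ ∑ _v ∈ B, Δ := by
        push_cast
        exact sum_le_sum fun v _ => by simpa [card_incidenceFinset_eq_degree] using hdeg v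
    _ = #B * Δ := by rw [sum_const, nsmul_eq_mul]

theorem card_edgeFinset_le_add_of_forall_mem (G H : SimpleGraph V) (c : Sym2 V → K)
    (C : Finset K) (B : Finset V) {M Δ : ℝ} (hM : ∀ x, #{e ∈ G.edgeFinset | c e = x} ≤ M)
    (hdeg : ∀ v, G.degree v ≤ Δ)
    (hGH : ∀ e ∈ G.edgeSet, e ∉ H.edgeSet → c e ∈ C ∨ ∃ v ∈ B, v ∈ e) :
    (#G.edgeFinset : ℝ) ≤ #H.edgeFinset + #C * M + #B * Δ := by
  have hsub : G.edgeFinset ⊆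
      H.edgeFinset ∪ {e ∈ G.edgeFinset | c e ∈ C} ∪ {e ∈ G.edgeFinset | ∃ v ∈ B, v ∈ e} := by
    intro e he
    by_cases heH : e ∈ H.edgeSet
    · simp [heH]
    · rcases hGH e (mem_edgeFinset.1 he) heH with h | h <;> simp [he, h]
  calc (#G.edgeFinset : ℝ)
      ≤ #H.edgeFinset + #{e ∈ G.edgeFinset | c e ∈ C} +
          #{e ∈ G.edgeFinset | ∃ v ∈ B, v ∈ e} := by
        exact_mod_cast (card_le_card hsub).trans
          ((card_union_le _ _).trans (add_le_add_left (card_union_le _ _) _))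
    _ ≤ _ := by
        gcongr
        exacts [G.card_filter_colour_mem_le c C hM, G.card_filter_exists_mem_le B hdeg]

theorem card_filter_colour_eq_natCard (G : SimpleGraph V) (c : Sym2 V → K) (x : K) :
    #{e ∈ G.edgeFinset | c e = x} = Nat.card {e : Sym2 V // e ∈ G.edgeSet ∧ c e = x} := by
  rw [Nat.card_eq_fintype_card, Fintype.card_subtype]
  congr 1
  ext e
  simp

noncomputable def cycleHomExtCount (G : SimpleGraph V) (k : ℕ) (w : Fin (k + 1) → V) : ℕ :=
  Nat.card {f : ZMod (2 * k) → V //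
    (∀ x, G.Adj (f x) (f (x + 1))) ∧ ∀ ℓ : Fin (k + 1), f ((ℓ : ℕ) : ZMod (2 * k)) = w ℓ}

theorem sum_cycleHomExtCount (G : SimpleGraph V) {k : ℕ} (hk : k ≠ 0) :
    ∑ w, G.cycleHomExtCount k w =
      Nat.card {f : ZMod (2 * k) → V // ∀ i, G.Adj (f i) (f (i + 1))} := by
  have : NeZero (2 * k) := ⟨by omega⟩
  simp only [cycleHomExtCount, Nat.card_eq_fintype_card, Fintype.card_subtype]
  rw [card_eq_sum_card_fiberwise (t := univ)
    (f := fun f (ℓ : Fin (k + 1)) => f ((ℓ : ℕ) : ZMod (2 * k))) fun _ _ => mem_univ _]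
  refine sum_congr rfl fun w _ => ?_
  rw [filter_filter]
  simp [funext_iff]

theorem card_lt_cycleHomExtCount_mul_le (G : SimpleGraph V) {k : ℕ} (hk : k ≠ 0) (q : ℝ) :
    #{w : Fin (k + 1) → V | q < G.cycleHomExtCount k w} * q ≤
      Nat.card {f : ZMod (2 * k) → V // ∀ i, G.Adj (f i) (f (i + 1))} := by
  rw [← G.sum_cycleHomExtCount hk, Nat.cast_sum, ← nsmul_eq_mul]
  calc _ ≤ ∑ w ∈ {w : Fin (k + 1) → V | q < G.cycleHomExtCount k w},
        (G.cycleHomExtCount k w : ℝ) :=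
        card_nsmul_le_sum _ _ _ fun w hw => (mem_filter.1 hw).2.le
    _ ≤ _ := sum_le_sum_of_subset_of_nonneg (subset_univ _) fun _ _ _ => by positivity

theorem card_lt_cycleHomExtCount_le (G : SimpleGraph V) {k : ℕ} (hk : k ≠ 0) {n d α : ℝ}
    (hα : 0 < α)
    (hhom : (Nat.card {f : ZMod (2 * k) → V // ∀ i, G.Adj (f i) (f (i + 1))} : ℝ) ≤
      α * n * d ^ k) :
    #{w : Fin (k + 1) → V | 2 * α * 16 ^ k < G.cycleHomExtCount k w} ≤ n * (d / 16) ^ k / 2 := by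
  have hq : α * n * d ^ k = n * (d / 16) ^ k / 2 * (2 * α * 16 ^ k) := by
    rw [div_pow]
    field_simp
  rw [hq] at hhom
  exact le_of_mul_le_mul_right ((G.card_lt_cycleHomExtCount_mul_le hk _).trans hhom)
    (by positivity)

theorem one_le_of_forall_degree_le {G : SimpleGraph V} {n : ℕ} {d μ : ℝ}
    (hn : n = Fintype.card V) (hn0 : 0 < n) (hd0 : 0 < d)
    (hd : (n : ℝ) * d = 2 * #G.edgeFinset) (hmax : ∀ v, G.degree v ≤ μ * d) : 1 ≤ μ := by
  have hsum : (n : ℝ) * d ≤ n * (μ * d) := by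
    calc (n : ℝ) * d = ∑ v, (G.degree v : ℝ) := by
          rw [hd]; exact_mod_cast G.sum_degrees_eq_twice_card_edges.symm
      _ ≤ ∑ _v, μ * d := sum_le_sum fun v _ => hmax v
      _ = n * (μ * d) := by rw [sum_const, card_univ, hn, nsmul_eq_mul]
  have : (0 : ℝ) < n * d := mul_pos (by exact_mod_cast hn0) hd0
  nlinarith

variable {G : SimpleGraph V} {c : Sym2 V → K}

theorem exists_large_subgraph_avoiding {n j : ℕ} {d μ s : ℝ} (hn : n = Fintype.card V)
    (hj : 1 ≤ j) (hjd : (j : ℝ) + 1 < d / 32) (hd : (n : ℝ) * d = 2 * #G.edgeFinset)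
    (hmax : ∀ v, G.degree v ≤ μ * d) (hμ : 1 ≤ μ) (hs : 0 < s)
    (hcol : ∀ x, #{e ∈ G.edgeFinset | c e = x} ≤ n * d * μ / s)
    (hsk : s * d ^ j * μ ^ j ≤ n / 4) (S : Finset V) (C : Finset K)
    (hS : #S ≤ s / (8 * (j + 1) * μ) * (j + 1 + 1))
    (hC : #C ≤ s / (8 * (j + 1) * μ) * (j + 1)) :
    ∃ H ≤ G, (∀ v, H.degree v = 0 ∨ d / 8 ≤ H.degree v) ∧ 5 / 32 * (n * d) ≤ #H.edgeFinset ∧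
      ∀ u v, H.Adj u v → c s(u, v) ∉ C ∧ u ∉ G.ballFinset S j ∧ v ∉ G.ballFinset S j := by
  have hj' : (1 : ℝ) ≤ j := by exact_mod_cast hj
  have hd0 : 0 < d := by linarith
  set B := G.ballFinset S j
  set H₀ := G.deleteEdges {e | c e ∈ C ∨ ∃ v ∈ B, v ∈ e}
  have hB : #B * (μ * d) ≤ 3 / 32 * (n * d) :=
    calc #B * (μ * d) ≤ 2 * #S * (μ * d) ^ (j + 1) :=
          G.card_ballFinset_mul_le S hmax (by nlinarith) (by positivity)
      _ ≤ 2 * (s / (8 * (j + 1) * μ) * (j + 1 + 1)) * (μ * d) ^ (j + 1) := by gcongr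
      _ = (j + 2) / (4 * (j + 1)) * (s * d ^ j * μ ^ j) * d := by
          field_simp
          ring
      _ ≤ 3 / 8 * (n / 4) * d := by
          gcongr ?_ * ?_ * _
          rw [div_le_iff₀ (by positivity)]
          linarith
      _ = 3 / 32 * (n * d) := by ring
  have hCbad : #C * (n * d * μ / s) ≤ 1 / 8 * (n * d) :=
    calc #C * (n * d * μ / s) ≤ s / (8 * (j + 1) * μ) * (j + 1) * (n * d * μ / s) := by gcongr
      _ = 1 / 8 * (n * d) := by field_simp
  have hH₀ := G.card_edgeFinset_le_add_of_forall_mem H₀ c C B hcol hmax fun e he heH₀ => by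
    by_contra h
    exact heH₀ (by rw [edgeSet_deleteEdges]; exact ⟨he, h⟩)
  obtain ⟨H, hHle, hHdeg, hHcard⟩ :=
    H₀.exists_le_forall_degree_eq_zero_or_le (θ := d / 8) (by positivity)
  refine ⟨H, hHle.trans (G.deleteEdges_le _), hHdeg, ?_, fun u v huv => ?_⟩
  · rw [← hn] at hHcard
    nlinarith
  · have := hHle huv
    simp only [H₀, deleteEdges_adj, Set.mem_ofPred_eq, not_or, not_exists, not_and,
      Sym2.mem_iff] at this
    exact ⟨this.2.1, fun h => (this.2.2 _ h).1 rfl, fun h => (this.2.2 _ h).2 rfl⟩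

theorem exists_many_extendable_rainbow_paths
    (hproper : ∀ u v w : V, G.Adj u v → G.Adj u w → v ≠ w → c s(u, v) ≠ c s(u, w))
    {n k : ℕ} {d μ α s : ℝ} (hn : n = Fintype.card V) (hk : 2 ≤ k) (hkd : (k : ℝ) < d / 32)
    (hd : (n : ℝ) * d = 2 * #G.edgeFinset) (hmax : ∀ v, G.degree v ≤ μ * d) (hμ : 1 ≤ μ)
    (hs : 0 < s) (hcol : ∀ x, #{e ∈ G.edgeFinset | c e = x} ≤ n * d * μ / s)
    (hsk : s * d ^ (k - 1) * μ ^ (k - 1) ≤ n / 4) (hα : 0 < α)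
    (hhom : (Nat.card {f : ZMod (2 * k) → V // ∀ i, G.Adj (f i) (f (i + 1))} : ℝ) ≤
      α * n * d ^ k)
    (S : Finset V) (C : Finset K) (hS : #S ≤ s / (8 * k * μ) * (k + 1))
    (hC : #C ≤ s / (8 * k * μ) * k) :
    ∃ A : Finset (Fin (k + 1) → V), n * (d / 32) ^ k ≤ #A ∧ ∀ w ∈ A, G.IsRainbowPath c w ∧
      (∀ ℓ : Fin k, c s(w ℓ.castSucc, w ℓ.succ) ∉ C) ∧ (∀ ℓ, w ℓ ∉ G.ballFinset S (k - 1)) ∧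
      G.cycleHomExtCount k w ≤ 2 * α * 16 ^ k := by
  obtain ⟨j, rfl⟩ : ∃ j, k = j + 1 := ⟨k - 1, by omega⟩
  rw [Nat.add_sub_cancel] at hsk ⊢
  push_cast at hkd hS hC
  obtain ⟨H, hHG, hHdeg, hEH, hHadj⟩ :=
    exists_large_subgraph_avoiding hn (by omega) hkd hd hmax hμ hs hcol hsk S C hS hC
  have hd0 : 0 < d := by linarith
  set q : ℝ := 2 * α * 16 ^ (j + 1)
  have hpaths : 5 * n * (d / 16) ^ (j + 1) ≤ #{w : Fin (j + 2) → V | H.IsRainbowPath c w} :=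
    calc 5 * n * (d / 16) ^ (j + 1) = 2 * (5 / 32 * (n * d)) * (d / 8 / 2) ^ j := by ring
      _ ≤ 2 * #H.edgeFinset * (d / 8 / 2) ^ j := by gcongr
      _ ≤ _ := le_card_isRainbowPath (fun u v w h₁ h₂ => hproper u v w (hHG h₁) (hHG h₂))
          hHdeg (by linarith)
  have hbad := G.card_lt_cycleHomExtCount_le (by omega) hα hhom
  set A : Finset (Fin (j + 2) → V) :=
    {w | H.IsRainbowPath c w ∧ G.cycleHomExtCount (j + 1) w ≤ q}
  have hcover : ({w | H.IsRainbowPath c w} : Finset (Fin (j + 2) → V)) ⊆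
      A ∪ ({w | q < G.cycleHomExtCount (j + 1) w} : Finset (Fin (j + 2) → V)) := by
    intro w hw
    by_cases hwq : (G.cycleHomExtCount (j + 1) w : ℝ) ≤ q
    · exact mem_union_left _ (mem_filter.2 ⟨mem_univ _, (mem_filter.1 hw).2, hwq⟩)
    · exact mem_union_right _ (mem_filter.2 ⟨mem_univ w, not_le.1 hwq⟩)
  refine ⟨A, ?_, fun w hw => ?_⟩
  · have hcount : (#{w : Fin (j + 2) → V | H.IsRainbowPath c w} : ℝ) ≤
        #A + #{w : Fin (j + 2) → V | q < G.cycleHomExtCount (j + 1) w} := by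
      exact_mod_cast (card_le_card hcover).trans (card_union_le _ _)
    have h32 : (n : ℝ) * (d / 32) ^ (j + 1) ≤ n * (d / 16) ^ (j + 1) := by
      gcongr
      linarith
    linarith
  · obtain ⟨hwH, hwq⟩ := (mem_filter.1 hw).2
    refine ⟨hwH.mono hHG, fun ℓ => (hHadj _ _ (hwH.adj ℓ)).1, fun i => ?_, hwq⟩
    induction i using Fin.lastCases with
    | last => exact (hHadj _ _ (hwH.adj (Fin.last j))).2.2
    | cast i => exact (hHadj _ _ (hwH.adj i)).2.1

end SimpleGraph

theorem KQNicePaths.snoc {V K : Type*} {G : SimpleGraph V} {c : Sym2 V → K} {k : ℕ} {q : ℝ}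
    {m : ℕ} {P : Fin m → Fin (k + 1) → V} (hP : KQNicePaths G c k q P) {w : Fin (k + 1) → V}
    (hw : G.IsRainbowPath c w)
    (hcol : ∀ i (j ℓ : Fin k), c s(w ℓ.castSucc, w ℓ.succ) ≠ c s(P i j.castSucc, P i j.succ))
    (hfar : ∀ i j ℓ (p : G.Walk (P i j) (w ℓ)), k - 1 < p.length)
    (hext : (G.cycleHomExtCount k w : ℝ) ≤ q) :
    KQNicePaths G c k q (Fin.snoc P w) := by
  obtain ⟨hpath, hrainbow, hdist, hhom⟩ := hP
  refine ⟨fun i => ?_, fun i i' ℓ ℓ' => ?_, fun i i' hne ℓ ℓ' => ?_, fun i => ?_⟩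
  · induction i using Fin.lastCases with
    | last => rw [Fin.snoc_last]; exact ⟨hw.injective, hw.adj⟩
    | cast i => rw [Fin.snoc_castSucc]; exact hpath i
  · induction i using Fin.lastCases with
    | last =>
      induction i' using Fin.lastCases with
      | last => rw [Fin.snoc_last]; exact fun h => by rw [hw.injective_colour h]
      | cast i' =>
        rw [Fin.snoc_last, Fin.snoc_castSucc]
        exact fun h => absurd h (hcol i' ℓ' ℓ)
    | cast i =>
      induction i' using Fin.lastCases with
      | last =>
        rw [Fin.snoc_last, Fin.snoc_castSucc]
        exact fun h => absurd h.symm (hcol i ℓ ℓ')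
      | cast i' => rw [Fin.snoc_castSucc, Fin.snoc_castSucc]; exact hrainbow i i' ℓ ℓ'
  · induction i using Fin.lastCases with
    | last =>
      induction i' using Fin.lastCases with
      | last => exact absurd rfl hne
      | cast i' =>
        rw [Fin.snoc_last, Fin.snoc_castSucc]
        exact fun p => by simpa using hfar i' ℓ' ℓ p.reverse
    | cast i =>
      induction i' using Fin.lastCases with
      | last => rw [Fin.snoc_last, Fin.snoc_castSucc]; exact hfar i ℓ ℓ'
      | cast i' =>
        rw [Fin.snoc_castSucc, Fin.snoc_castSucc]
        exact hdist i i' (fun h => hne (by rw [h])) ℓ ℓ'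
  · induction i using Fin.lastCases with
    | last => rw [Fin.snoc_last]; exact hext
    | cast i => rw [Fin.snoc_castSucc]; exact hhom i

theorem KQNicePaths.exists_many_snoc {V K : Type*} [Fintype V] {G : SimpleGraph V}
    {c : Sym2 V → K}
    (hproper : ∀ u v w : V, G.Adj u v → G.Adj u w → v ≠ w → c s(u, v) ≠ c s(u, w))
    {n k : ℕ} {d μ α s : ℝ} (hn : n = Fintype.card V) (hk : 2 ≤ k) (hkd : (k : ℝ) < d / 32)
    (hd : (n : ℝ) * d = 2 * #G.edgeFinset) (hmax : ∀ v, G.degree v ≤ μ * d) (hμ : 1 ≤ μ)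
    (hs : 0 < s) (hcol : ∀ x, #{e ∈ G.edgeFinset | c e = x} ≤ n * d * μ / s)
    (hsk : s * d ^ (k - 1) * μ ^ (k - 1) ≤ n / 4) (hα : 0 < α)
    (hhom : (Nat.card {f : ZMod (2 * k) → V // ∀ i, G.Adj (f i) (f (i + 1))} : ℝ) ≤
      α * n * d ^ k)
    {m : ℕ} {P : Fin m → Fin (k + 1) → V} (hP : KQNicePaths G c k (2 * α * 16 ^ k) P)
    (hm : (m : ℝ) < s / (8 * k * μ)) :
    ∃ A : Finset (Fin (k + 1) → V), n * (d / 32) ^ k ≤ #A ∧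
      ∀ w ∈ A, KQNicePaths G c k (2 * α * 16 ^ k) (Fin.snoc P w) := by
  set S := univ.image (Function.uncurry P)
  set C := univ.image fun x : Fin m × Fin k => c s(P x.1 x.2.castSucc, P x.1 x.2.succ)
  have hS : (#S : ℝ) ≤ s / (8 * k * μ) * (k + 1) :=
    calc (#S : ℝ) ≤ m * (k + 1) := by exact_mod_cast card_image_le.trans (by simp)
      _ ≤ _ := by gcongr
  have hC : (#C : ℝ) ≤ s / (8 * k * μ) * k :=
    calc (#C : ℝ) ≤ m * k := by exact_mod_cast card_image_le.trans (by simp)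
      _ ≤ _ := by gcongr
  obtain ⟨A, hA, hAw⟩ := SimpleGraph.exists_many_extendable_rainbow_paths hproper hn hk hkd hd
    hmax hμ hs hcol hsk hα hhom S C hS hC
  refine ⟨A, hA, fun w hw => ?_⟩
  obtain ⟨hwG, hwC, hwB, hwq⟩ := hAw w hw
  refine hP.snoc hwG (fun i j ℓ h => hwC ℓ (h ▸ mem_image_of_mem _ (mem_univ (i, j))))
    (fun i j ℓ p => ?_) hwq
  by_contra! hp
  exact hwB ℓ (G.mem_ballFinset_of_walk (mem_image_of_mem _ (mem_univ (i, j))) p hp)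

theorem stmt_16_general {V K : Type*} [Fintype V]
    (G : SimpleGraph V) (c : Sym2 V → K)
    (hproper : ∀ u v w : V, G.Adj u v → G.Adj u w → v ≠ w → c s(u, v) ≠ c s(u, w))
    (n : ℕ) (hn : n = Fintype.card V) (d μ α : ℝ) (s k : ℕ) (hk : 2 ≤ k)
    (hkd : (k : ℝ) < d / 32)
    (hd : (n : ℝ) * d = 2 * Nat.card G.edgeSet)
    (hmax : ∀ v : V, (Nat.card (G.neighborSet v) : ℝ) ≤ μ * d)
    (hcol : ∀ x : K, (Nat.card {e : Sym2 V // e ∈ G.edgeSet ∧ c e = x} : ℝ) ≤ n * d * μ / s)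
    (hsk : (s : ℝ) ≤ 1 / 4 * n * d ^ (-(k : ℝ) + 1) * μ ^ (-(k : ℝ) + 1))
    (hα : 1 < α)
    (hhom : (Nat.card {f : ZMod (2 * k) → V // ∀ i, G.Adj (f i) (f (i + 1))} : ℝ) ≤
      α * n * d ^ k)
    (t : ℕ) (ht : t = ⌈(s : ℝ) / (8 * k * μ)⌉₊) :
    ((n : ℝ) * (d / 32) ^ k) ^ t ≤
      Nat.card {P : Fin t → Fin (k + 1) → V // KQNicePaths G c k (2 * α * 16 ^ k) P} := by
  have hd0 : 0 < d := by linarith [(k.cast_nonneg : (0 : ℝ) ≤ k)]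
  have hd' : (n : ℝ) * d = 2 * #G.edgeFinset := by
    rw [hd, Nat.card_eq_fintype_card, SimpleGraph.edgeFinset_card]
  have hmax' : ∀ v, (G.degree v : ℝ) ≤ μ * d := fun v => by
    rw [← SimpleGraph.card_neighborSet_eq_degree, ← Nat.card_eq_fintype_card]
    exact hmax v
  have hcol' : ∀ x, (#{e ∈ G.edgeFinset | c e = x} : ℝ) ≤ n * d * μ / s := fun x => by
    rw [G.card_filter_colour_eq_natCard]
    exact hcol x
  rw [Nat.card_eq_fintype_card, Fintype.card_subtype]
  refine pow_le_card_of_forall_exists_snoc (fun P => KQNicePaths G c k (2 * α * 16 ^ k) P)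
    (by positivity) (by simp [KQNicePaths]) fun m hm P hP => ?_
  have hτ : (m : ℝ) < s / (8 * k * μ) := Nat.lt_ceil.1 (ht ▸ hm)
  have hτ0 : (0 : ℝ) < s / (8 * k * μ) := (Nat.cast_nonneg m).trans_lt hτ
  have hs : (0 : ℝ) < s := Nat.cast_pos.2 (Nat.pos_of_ne_zero fun h => by simp [h] at hτ0)
  have hμ0 : 0 < μ := pos_of_mul_pos_right ((div_pos_iff_of_pos_left hs).1 hτ0) (by positivity)
  have hsk' := mul_pow_le_of_le_rpow (by omega) hd0 hμ0 hsk
  have hn0 : 0 < n := by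
    have : (0 : ℝ) < s * d ^ (k - 1) * μ ^ (k - 1) := by positivity
    exact_mod_cast (by linarith : (0 : ℝ) < n)
  exact hP.exists_many_snoc hproper hn hk hkd hd' hmax'
    (G.one_le_of_forall_degree_le hn hn0 hd0 hd' hmax') hs hcol' hsk' (by linarith) hhom hτ

/-- If `G` is a properly edge-coloured μ-balanced graph on `n` vertices with average degree
`d ≥ 2` and `s` colours, `2 ≤ k < d/32`, `s ≤ (1/4)·n·d^{-k+1}·μ^{-k+1}`, `α > 1` and
`hom(C_{2k},G) ≤ α·n·d^k`, then for `t = ⌈s/(8kμ)⌉` there are at least `(n·(d/32)^k)^t`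
sequences of labelled paths which are `(k, 2α·16^k)`-nice. -/
theorem stmt_16 {V K : Type*} [Fintype V]
    (G : SimpleGraph V) (c : Sym2 V → K)
    (hproper : ∀ u v w : V, G.Adj u v → G.Adj u w → v ≠ w → c s(u, v) ≠ c s(u, w))
    (n : ℕ) (hn : n = Fintype.card V) (d μ α : ℝ) (hd2 : 2 ≤ d) (s k : ℕ) (hk : 2 ≤ k)
    (hkd : (k : ℝ) < d / 32)
    (hd : (n : ℝ) * d = 2 * Nat.card G.edgeSet)
    (hmax : ∀ v : V, (Nat.card (G.neighborSet v) : ℝ) ≤ μ * d)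
    (hs : s = Nat.card {x : K // ∃ e ∈ G.edgeSet, c e = x}) (hsn : s ≤ n)
    (hcol : ∀ x : K, (Nat.card {e : Sym2 V // e ∈ G.edgeSet ∧ c e = x} : ℝ) ≤ n * d * μ / s)
    (hsk : (s : ℝ) ≤ 1 / 4 * n * d ^ (-(k : ℝ) + 1) * μ ^ (-(k : ℝ) + 1))
    (hα : 1 < α)
    (hhom : (Nat.card {f : ZMod (2 * k) → V // ∀ i, G.Adj (f i) (f (i + 1))} : ℝ) ≤
      α * n * d ^ k)
    (t : ℕ) (ht : t = ⌈(s : ℝ) / (8 * k * μ)⌉₊) :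
    ((n : ℝ) * (d / 32) ^ k) ^ t ≤
      Nat.card {P : Fin t → Fin (k + 1) → V // KQNicePaths G c k (2 * α * 16 ^ k) P} :=
  stmt_16_general G c hproper n hn d μ α s k hk hkd hd hmax hcol hsk hα hhom t ht
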